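/- Let R be a supervisor realization and define the language L_R ⊆ L(𝒜) inductively by: ε ∈ L_R; if s ∈ L_R and the state of 𝒜 reached by s is a player-2 state, then se ∈ L_R for every e ∈ Σ_{o,e} with se ∈ L(𝒜); if s ∈ L_R and the state reached by s is a player-1 state, then sγ ∈ L_R for γ = Σ_uc and for γ = C_R(η(s)), where η : E* → Σ_o* is the natural projection erasing all events of E not in Σ_o. Then L_R is controllable with respect to L(𝒜) and the uncontrollable events E \ E_c (where E_c = Γ \ {Σ_uc}), and L_R is normal with respect to the observable events E_o = E \ Σ_a^e and L(𝒜). -/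

import Mathlib

attribute [local instance] Classical.propDecidable

noncomputable section

namespace RobustDES

/-- Events of the attacked system `Σ_m = Σ ∪ Σ_a^i ∪ Σ_a^d`:
`plain a` is a legitimate event `a ∈ Σ`, `ins a` is the inserted copy `a_i`
and `del a` is the deleted copy `a_d`. -/
inductive Ev (S : Type) : Type
  | plain : S → Ev S
  | ins : S → Ev S
  | del : S → Ev S

/-- Extension of a partial transition function to strings. -/
def run {X E : Type} (δ : X → E → Option X) : X → List E → Option X
  | x, [] => some x
  | x, e :: s => (δ x e).bind fun y => run δ y s

/-- The language generated by a partial automaton `(X, δ, x0)`. -/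
def Lang {X E : Type} (δ : X → E → Option X) (x0 : X) : Set (List E) :=
  { s | (run δ x0 s).isSome }

variable {S XG XR XA : Type}

/-- The projection `P^G : Σ_m* → Σ*` (`a, a_d ↦ a`, `a_i ↦ ε`). -/
def PGproj : List (Ev S) → List S := fun s =>
  s.flatMap fun e =>
    match e with
    | .plain a => [a]
    | .del a => [a]
    | .ins _ => []

/-- The projection `P^S : Σ_m* → Σ*` (`a, a_i ↦ a`, `a_d ↦ ε`). -/
def PSproj : List (Ev S) → List S := fun s =>
  s.flatMap fun e =>
    match e with
    | .plain a => [a]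
    | .ins a => [a]
    | .del _ => []

/-- Natural projection `P_{ΣΣo}` erasing events not in `So`. -/
def projOn (So : Set S) (s : List S) : List S :=
  s.filter fun e => decide (e ∈ So)

/-- Membership of a tagged event in `Σ_{o,e} = Σ_o ∪ Σ_a^i ∪ Σ_a^d`. -/
def inOe (So Sa : Set S) : Ev S → Prop
  | .plain a => a ∈ So
  | .ins a => a ∈ Sa
  | .del a => a ∈ Sa

/-- Natural projection `P_{Σ_mΣ_{o,e}}` erasing the unobservable events `Σ_uo`. -/
def projOe (So : Set S) : List (Ev S) → List (Ev S) := fun s =>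
  s.flatMap fun e =>
    match e with
    | .plain a => if a ∈ So then [Ev.plain a] else []
    | e => [e]

/-- Transition function of the attacked plant `G_a` (over `Σ_m`):
`δ_{G_a}(x,e) = δ_G(x, P^G(e))`. -/
def δGa (Sa : Set S) (δG : XG → S → Option XG) : XG → Ev S → Option XG
  | x, .plain a => δG x a
  | x, .del a => if a ∈ Sa then δG x a else none
  | x, .ins a => if a ∈ Sa then some x else none

/-- Active (legitimate) event set of a supervisor state. -/
def ΓR (δR : XR → S → Option XR) (y : XR) : Set S := {e | (δR y e).isSome}

/-- Transition function of the attacked supervisor `R_a` (over `Σ_m`). -/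
def δRa (Sa : Set S) (δR : XR → S → Option XR) : XR → Ev S → Option XR
  | y, .plain a => δR y a
  | y, .ins a =>
      if a ∈ Sa then (if (δR y a).isSome then δR y a else some y) else none
  | y, .del a =>
      if a ∈ Sa then (if (δR y a).isSome then some y else none) else none

/-- `R` is a supervisor realization: every uncontrollable event is enabled
everywhere and enabled unobservable events self-loop. -/
def IsSupRealization (So Suc : Set S) (δR : XR → S → Option XR) : Prop :=
  (∀ x e, e ∈ Suc → (δR x e).isSome) ∧
  (∀ x e, e ∉ So → (δR x e).isSome → δR x e = some x)

/-- `A` is an attack automaton over `Σ_{o,e}`: it is complete on `Σ_o \ Σ_a`,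
for every `e ∈ Σ_a` either `e` or `e_d` is defined, and it is undefined outside
`Σ_{o,e}`. -/
def IsAttack (So Sa : Set S) (δA : XA → Ev S → Option XA) : Prop :=
  (∀ q a, a ∈ So → a ∉ Sa → (δA q (.plain a)).isSome) ∧
  (∀ q a, a ∈ Sa → ((δA q (.plain a)).isSome ∨ (δA q (.del a)).isSome)) ∧
  (∀ q e, ¬ inOe So Sa e → δA q e = none)

/-- Transition function of the composition `G_a || R_a || A` over `Σ_m`:
all three components move on events of `Σ_{o,e}`, only `G_a` and `R_a` move on
unobservable events. -/
def δGRA (So Sa : Set S) (δG : XG → S → Option XG) (δR : XR → S → Option XR)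
    (δA : XA → Ev S → Option XA) :
    XG × XR × XA → Ev S → Option (XG × XR × XA) := fun p e =>
  match e with
  | .plain a =>
    if a ∈ So then
      match δGa Sa δG p.1 (.plain a), δRa Sa δR p.2.1 (.plain a), δA p.2.2 (.plain a) with
      | some x, some y, some z => some (x, y, z)
      | _, _, _ => none
    else
      match δGa Sa δG p.1 (.plain a), δRa Sa δR p.2.1 (.plain a) with
      | some x, some y => some (x, y, p.2.2)
      | _, _ => none
  | e =>
      match δGa Sa δG p.1 e, δRa Sa δR p.2.1 e, δA p.2.2 e with
      | some x, some y, some z => some (x, y, z)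
      | _, _, _ => none

/-- Transition function of the composition `G_a || R_a` over `Σ_m`. -/
def δGaRa (Sa : Set S) (δG : XG → S → Option XG) (δR : XR → S → Option XR) :
    XG × XR → Ev S → Option (XG × XR) := fun p e =>
  match δGa Sa δG p.1 e, δRa Sa δR p.2 e with
  | some x, some y => some (x, y)
  | _, _ => none

/-- `R` is robust w.r.t. `G`, `X_crit` and `A`:
`δ_G(x_{0,G}, s) ∉ X_crit` for every `s ∈ L(S_A/G) = P^G(L(G_a||R_a||A))`. -/
def Robust (So Sa : Set S) (Xcrit : Set XG)
    (δG : XG → S → Option XG) (x0G : XG)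
    (δR : XR → S → Option XR) (x0R : XR)
    (δA : XA → Ev S → Option XA) (x0A : XA) : Prop :=
  ∀ t ∈ Lang (δGRA So Sa δG δR δA) (x0G, x0R, x0A),
    ∀ x, run δG x0G (PGproj t) = some x → x ∉ Xcrit

/-- Total extension `Δ_R` of `δ_R` over observable strings. -/
def ΔRrun (δR : XR → S → Option XR) : XR → List S → XR
  | y, [] => y
  | y, e :: s => ΔRrun δR ((δR y e).getD y) s

/-- Control decision `C_R(s) = Γ_R(Δ_R(x_{0,R}, s))`. -/
def CR (δR : XR → S → Option XR) (x0R : XR) (s : List S) : Set S :=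
  {e | (δR (ΔRrun δR x0R s) e).isSome}

/-- The state estimate under attack
`RE(s) = {x : x = δ_{G_a}(x_{0,G}, t), t ∈ P⁻¹_{Σ_mΣ_{o,e}}(s) ∩ L(G_a||R_a||A)}`. -/
def RE (So Sa : Set S) (δG : XG → S → Option XG) (x0G : XG)
    (δR : XR → S → Option XR) (x0R : XR)
    (δA : XA → Ev S → Option XA) (x0A : XA) (s : List (Ev S)) : Set XG :=
  {x | ∃ t, projOe So t = s ∧ t ∈ Lang (δGRA So Sa δG δR δA) (x0G, x0R, x0A) ∧
        run (δGa Sa δG) x0G t = some x}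

/-! ### The arena -/

/-- Unobservable reach `UR_γ(Q)`. -/
def URch (So : Set S) (δG : XG → S → Option XG) (γ : Set S) (Q : Set XG) : Set XG :=
  {x | ∃ t : List S, (∀ a ∈ t, a ∉ So ∧ a ∈ γ) ∧ ∃ q ∈ Q, run δG q t = some x}

/-- Observable reach `NX_e(Q)`. -/
def NXr (δG : XG → S → Option XG) (a : S) (Q : Set XG) : Set XG :=
  {x | ∃ q ∈ Q, δG q a = some x}

/-- Active event set `Γ_G(Q)` of a set of plant states. -/
def ΓGset (δG : XG → S → Option XG) (Q : Set XG) : Set S :=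
  {a | ∃ x ∈ Q, (δG x a).isSome}

/-- Player-1 states of the arena. -/
abbrev AQ1 (XG XA : Type) := Set XG × XA

/-- Player-2 states of the arena. -/
abbrev AQ2 (S XG XA : Type) := Set XG × XA × Set S × Option S

/-- Player-1 transition `h₁((S₁,S₂),γ) = (UR_γ(S₁), S₂, γ, ε)`. -/
def h1 (So : Set S) (δG : XG → S → Option XG) (p : AQ1 XG XA) (γ : Set S) :
    AQ2 S XG XA :=
  (URch So δG γ p.1, p.2, γ, none)

/-- Player-2 transition `h₂`. -/
def h2 (So Sa : Set S) (δG : XG → S → Option XG) (δA : XA → Ev S → Option XA)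
    (q : AQ2 S XG XA) : Ev S → Option (AQ1 XG XA ⊕ AQ2 S XG XA)
  | .plain a =>
    if a ∈ So then
      if q.2.2.2 = some a then some (Sum.inl (q.1, q.2.1))
      else if q.2.2.2 = none ∧ a ∈ ΓGset δG q.1 ∧ a ∈ q.2.2.1 then
        (δA q.2.1 (.plain a)).map fun z => Sum.inl (NXr δG a q.1, z)
      else none
    else none
  | .ins a =>
    if a ∈ Sa ∧ q.2.2.2 = none then
      (δA q.2.1 (.ins a)).map fun z => Sum.inr (q.1, z, q.2.2.1, some a)
    else none
  | .del a =>
    if a ∈ Sa ∧ q.2.2.2 = none ∧ a ∈ ΓGset δG q.1 ∧ a ∈ q.2.2.1 then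
      (δA q.2.1 (.del a)).map fun z =>
        Sum.inr (URch So δG q.2.2.1 (NXr δG a q.1), z, q.2.2.1, none)
    else none

/-- One-step map `H₂ : Q₂ × Σ_{o,e} × Γ ⇀ Q₂` of Definition 6. -/
def H2 (So Sa : Set S) (δG : XG → S → Option XG) (δA : XA → Ev S → Option XA)
    (q : AQ2 S XG XA) : Ev S → Set S → Option (AQ2 S XG XA)
  | .plain a, γ =>
      (h2 So Sa δG δA q (.plain a)).bind fun r =>
        match r with
        | .inl p => some (h1 So δG p γ)
        | .inr _ => none
  | .del a, _ =>
      (h2 So Sa δG δA q (.del a)).bind fun r =>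
        match r with
        | .inr q' => some q'
        | .inl _ => none
  | .ins a, γ =>
      (h2 So Sa δG δA q (.ins a)).bind fun r =>
        match r with
        | .inr q' =>
            (h2 So Sa δG δA q' (.plain a)).bind fun r2 =>
              match r2 with
              | .inl p => some (h1 So δG p γ)
              | .inr _ => none
        | .inl _ => none

/-- Extension of `H₂` to strings with a sequence of control decisions. -/
def H2run (So Sa : Set S) (δG : XG → S → Option XG) (δA : XA → Ev S → Option XA) :
    AQ2 S XG XA → List (Ev S) → List (Set S) → Option (AQ2 S XG XA)
  | q, [], [] => some q
  | q, e :: s, γ :: γs =>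
      (H2 So Sa δG δA q e γ).bind fun q' => H2run So Sa δG δA q' s γs
  | _, _ :: _, [] => none
  | _, [], _ :: _ => none

/-- The sequence of control decisions `γ_i = C_R(P^S(s^i))`, `i = 1, …, |s|`. -/
def ctrlSeq (δR : XR → S → Option XR) (x0R : XR) (s : List (Ev S)) : List (Set S) :=
  (List.range s.length).map fun i => CR δR x0R (PSproj (s.take (i + 1)))

/-- Initial arena state `q₀ = ({x_{0,G}}, x_{0,A})`. -/
def arenaInit (x0G : XG) (x0A : XA) : AQ1 XG XA := ({x0G}, x0A)

/-- The arena `𝒜` regarded as a partial automaton over `E = Γ ∪ Σ_{o,e}`. -/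
def δAr (So Suc Sa : Set S) (δG : XG → S → Option XG) (δA : XA → Ev S → Option XA) :
    (AQ1 XG XA ⊕ AQ2 S XG XA) → (Set S ⊕ Ev S) → Option (AQ1 XG XA ⊕ AQ2 S XG XA)
  | .inl p, .inl γ => if Suc ⊆ γ then some (.inr (h1 So δG p γ)) else none
  | .inr q, .inr e => h2 So Sa δG δA q e
  | _, _ => none

/-- The projection `I₁` onto the plant state-estimate component. -/
def I1 : (AQ1 XG XA ⊕ AQ2 S XG XA) → Set XG := Sum.elim Prod.fst Prod.fst

/-- The projection `I₂` onto the attacker-state component. -/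
def I2 : (AQ1 XG XA ⊕ AQ2 S XG XA) → XA := Sum.elim (fun p => p.2) (fun q => q.2.1)

/-- The language `L(𝒜)` of the arena. -/
def LA (So Suc Sa : Set S) (δG : XG → S → Option XG) (δA : XA → Ev S → Option XA)
    (x0G : XG) (x0A : XA) : Set (List (Set S ⊕ Ev S)) :=
  Lang (δAr So Suc Sa δG δA) (Sum.inl (arenaInit x0G x0A))

/-- The language `L(𝒜^{trim})`: strings of `L(𝒜)` whose runs visit no state `q`
with `I₁(q) ∩ X_crit ≠ ∅`. -/
def LAtrim (So Suc Sa : Set S) (δG : XG → S → Option XG)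
    (δA : XA → Ev S → Option XA) (x0G : XG) (x0A : XA) (Xcrit : Set XG) :
    Set (List (Set S ⊕ Ev S)) :=
  {s | s ∈ LA So Suc Sa δG δA x0G x0A ∧
    ∀ u, u <+: s → ∀ st, run (δAr So Suc Sa δG δA) (Sum.inl (arenaInit x0G x0A)) u =
      some st → I1 st ∩ Xcrit = ∅}

/-- The controllable meta-events `E_c = Γ \ {Σ_uc}`. -/
def Ec (Suc : Set S) : Set (Set S ⊕ Ev S) :=
  {a | ∃ γ : Set S, a = Sum.inl γ ∧ Suc ⊆ γ ∧ γ ≠ Suc}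

/-- `K` is controllable w.r.t. `L` and the uncontrollable events `Euc`. -/
def ControllableLang {E : Type} (L : Set (List E)) (Euc : Set E)
    (K : Set (List E)) : Prop :=
  ∀ s ∈ K, ∀ a ∈ Euc, s ++ [a] ∈ L → s ++ [a] ∈ K

/-- `K` is normal w.r.t. the projection `P` and `L`: `K = P⁻¹(P(K)) ∩ L`. -/
def NormalLang {E : Type} (P : List E → List E) (L K : Set (List E)) : Prop :=
  K = {s | s ∈ L ∧ ∃ t ∈ K, P t = P s}

/-- Natural projection of meta-strings onto the observable meta-events
`E_o = E \ Σ_a^e`. -/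
def projEo : List (Set S ⊕ Ev S) → List (Set S ⊕ Ev S) := fun s =>
  s.flatMap fun a =>
    match a with
    | Sum.inr (.ins _) => []
    | Sum.inr (.del _) => []
    | a => [a]

/-- `L(𝒜^{sup})`: the union of all sublanguages of `L(𝒜^{trim})` that are
controllable w.r.t. `L(𝒜)` and `E \ E_c` and normal w.r.t. `E_o` and `L(𝒜)`. -/
def Lsup (So Suc Sa : Set S) (δG : XG → S → Option XG)
    (δA : XA → Ev S → Option XA) (x0G : XG) (x0A : XA) (Xcrit : Set XG) :
    Set (List (Set S ⊕ Ev S)) :=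
  ⋃₀ {K | K ⊆ LAtrim So Suc Sa δG δA x0G x0A Xcrit ∧
      ControllableLang (LA So Suc Sa δG δA x0G x0A) (Ec Suc)ᶜ K ∧
      NormalLang projEo (LA So Suc Sa δG δA x0G x0A) K}

/-- The run word `W(s; γ₀, …, γ_{|s|})` in the arena. -/
def Wword (γ0 : Set S) (s : List (Ev S)) (γs : List (Set S)) :
    List (Set S ⊕ Ev S) :=
  Sum.inl γ0 :: (s.zip γs).flatMap fun p =>
    match p.1 with
    | .plain a => [Sum.inr (Ev.plain a), Sum.inl p.2]
    | .del a => [Sum.inr (Ev.del a)]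
    | .ins a => [Sum.inr (Ev.ins a), Sum.inr (Ev.plain a), Sum.inl p.2]

/-- The projection `η : E* → Σ_o*` erasing all meta-events not in `Σ_o`. -/
def ηproj (So : Set S) : List (Set S ⊕ Ev S) → List S := fun s =>
  s.flatMap fun a =>
    match a with
    | Sum.inr (.plain e) => if e ∈ So then [e] else []
    | _ => []


/-- The all-out attack strategy: a single state with every event of `Σ_{o,e}`
defined (as a self-loop). -/
def allOutδ (So Sa : Set S) : Unit → Ev S → Option Unit := fun _ e =>
  if inOe So Sa e then some () else none

/-- The supervisor extracted from a generator of `L(𝒜^{sup})` by a choice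
function `c` of control decisions (Algorithm 1): on an observable enabled event
follow the arena (choose `c y`, then the event), on an unobservable enabled
event self-loop, and disable events outside `c y`. -/
def extractR {Y : Type} (So : Set S) (δg : Y → (Set S ⊕ Ev S) → Option Y)
    (c : Y → Set S) : Y → S → Option Y := fun y a =>
  if a ∈ c y then
    if a ∈ So then
      some (((δg y (Sum.inl (c y))).bind fun y' =>
        δg y' (Sum.inr (Ev.plain a))).getD y)
    else some y
  else none

/-- The language `L_R` built inductively from a supervisor `R` inside the arena:
`ε ∈ L_R`; from a player-2 state every event of `Σ_{o,e}` feasible in `𝒜` may be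
appended; from a player-1 state the control decisions `Σ_uc` and `C_R(η(s))`
may be appended. -/
inductive LRmem {S XG XA XR : Type} (So Suc Sa : Set S)
    (δG : XG → S → Option XG) (x0G : XG)
    (δA : XA → Ev S → Option XA) (x0A : XA)
    (δR : XR → S → Option XR) (x0R : XR) : List (Set S ⊕ Ev S) → Prop
  | nil : LRmem So Suc Sa δG x0G δA x0A δR x0R []
  | p2 (s : List (Set S ⊕ Ev S)) (q : AQ2 S XG XA) (e : Ev S) :
      LRmem So Suc Sa δG x0G δA x0A δR x0R s →
      run (δAr So Suc Sa δG δA) (Sum.inl (arenaInit x0G x0A)) s = some (Sum.inr q) →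
      inOe So Sa e →
      (run (δAr So Suc Sa δG δA) (Sum.inl (arenaInit x0G x0A))
        (s ++ [Sum.inr e])).isSome →
      LRmem So Suc Sa δG x0G δA x0A δR x0R (s ++ [Sum.inr e])
  | p1uc (s : List (Set S ⊕ Ev S)) (p : AQ1 XG XA) :
      LRmem So Suc Sa δG x0G δA x0A δR x0R s →
      run (δAr So Suc Sa δG δA) (Sum.inl (arenaInit x0G x0A)) s = some (Sum.inl p) →
      LRmem So Suc Sa δG x0G δA x0A δR x0R (s ++ [Sum.inl Suc])
  | p1R (s : List (Set S ⊕ Ev S)) (p : AQ1 XG XA) :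
      LRmem So Suc Sa δG x0G δA x0A δR x0R s →
      run (δAr So Suc Sa δG δA) (Sum.inl (arenaInit x0G x0A)) s = some (Sum.inl p) →
      LRmem So Suc Sa δG x0G δA x0A δR x0R (s ++ [Sum.inl (CR δR x0R (ηproj So s))])

/-!
Inside the arena, `L_R` consists exactly of the strings of `L(𝒜)` whose control decisions are
`Σ_uc` or `C_R` of the observation made so far: player-2 moves are never restricted.
Controllability follows because an uncontrollable meta-event is a player-2 move or the decision
`Σ_uc`; normality because neither the decisions nor the observation `η` they depend on see the
erased events `Σ_a^e`.
-/

lemma run_append {X E : Type} (δ : X → E → Option X) (x : X) (u v : List E) :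
    run δ x (u ++ v) = (run δ x u).bind fun y => run δ y v := by
  induction u generalizing x with
  | nil => rfl
  | cons e u ih => cases h : δ x e <;> simp [run, h, ih]

lemma exists_run_of_run_append_singleton_isSome {X E : Type} {δ : X → E → Option X}
    {x : X} {s : List E} {a : E} (h : (run δ x (s ++ [a])).isSome) :
    ∃ y, run δ x s = some y ∧ (δ y a).isSome := by
  rw [run_append] at h
  cases hs : run δ x s with
  | none => simp [hs] at h
  | some y => cases hy : δ y a <;> simp_all [run]

lemma ηproj_append (So : Set S) (u v : List (Set S ⊕ Ev S)) :
    ηproj So (u ++ v) = ηproj So u ++ ηproj So v :=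
  List.flatMap_append

/-- `FollowsControl Suc So C w s`: every control decision `γ` in `s` is either `Σ_uc` or the
decision `C` takes after observing `w` followed by the `Σ_o`-events of `s` before `γ`. -/
def FollowsControl (Suc So : Set S) (C : List S → Set S) :
    List S → List (Set S ⊕ Ev S) → Prop
  | _, [] => True
  | w, .inl γ :: s => (γ = Suc ∨ γ = C w) ∧ FollowsControl Suc So C w s
  | w, .inr e :: s => FollowsControl Suc So C (w ++ ηproj So [.inr e]) s

section FollowsControl

variable {Suc So : Set S} {C : List S → Set S}

lemma followsControl_append_singleton (w : List S) (s : List (Set S ⊕ Ev S))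
    (x : Set S ⊕ Ev S) :
    FollowsControl Suc So C w (s ++ [x]) ↔ FollowsControl Suc So C w s ∧
      ∀ γ, x = .inl γ → γ = Suc ∨ γ = C (w ++ ηproj So s) := by
  induction s generalizing w with
  | nil => rcases x with γ | e <;> simp [FollowsControl, ηproj]
  | cons a s ih =>
    rcases a with γ | e
    · simp [FollowsControl, ih, ηproj, and_assoc]
    · simp [FollowsControl, ih, ← ηproj_append]

lemma followsControl_projEo (w : List S) (s : List (Set S ⊕ Ev S)) :
    FollowsControl Suc So C w (projEo s) ↔ FollowsControl Suc So C w s := by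
  induction s generalizing w with
  | nil => rfl
  | cons a s ih =>
    rcases a with γ | (e | e | e) <;> simp [projEo, FollowsControl, ηproj, ← ih]

end FollowsControl

section Arena

variable {So Suc Sa : Set S} {δG : XG → S → Option XG} {δA : XA → Ev S → Option XA}

lemma δAr_inl_isSome {st : AQ1 XG XA ⊕ AQ2 S XG XA} {γ : Set S} :
    (δAr So Suc Sa δG δA st (.inl γ)).isSome ↔ ∃ p, st = .inl p ∧ Suc ⊆ γ := by
  rcases st with p | q
  · by_cases hγ : Suc ⊆ γ <;> simp [δAr, hγ]
  · simp [δAr]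

lemma δAr_inr_isSome {st : AQ1 XG XA ⊕ AQ2 S XG XA} {e : Ev S}
    (h : (δAr So Suc Sa δG δA st (.inr e)).isSome) : ∃ q, st = .inr q ∧ inOe So Sa e := by
  rcases st with p | q
  · simp [δAr] at h
  refine ⟨q, rfl, ?_⟩
  rcases e with a | a | a
  · by_contra ha
    simp [δAr, h2, show a ∉ So from ha] at h
  all_goals
    by_contra ha
    simp [δAr, h2, show a ∉ Sa from ha] at h

lemma lrMem_iff {x0G : XG} {x0A : XA} {δR : XR → S → Option XR} {x0R : XR}
    (hSuc : ∀ y e, e ∈ Suc → (δR y e).isSome) {s : List (Set S ⊕ Ev S)} :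
    LRmem So Suc Sa δG x0G δA x0A δR x0R s ↔
      s ∈ LA So Suc Sa δG δA x0G x0A ∧ FollowsControl Suc So (CR δR x0R) [] s := by
  constructor
  · intro h
    induction h with
    | nil => exact ⟨rfl, trivial⟩
    | p2 s q e _ _ _ hL ih =>
      exact ⟨hL, (followsControl_append_singleton _ _ _).2 ⟨ih.2, by simp⟩⟩
    | p1uc s p _ hrun ih =>
      refine ⟨?_, (followsControl_append_singleton _ _ _).2 ⟨ih.2, by simp⟩⟩
      simp [LA, Lang, run_append, hrun, run, δAr]
    | p1R s p _ hrun ih =>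
      have hsub : Suc ⊆ CR δR x0R (ηproj So s) := fun e he => hSuc _ e he
      refine ⟨?_, (followsControl_append_singleton _ _ _).2 ⟨ih.2, by simp⟩⟩
      simp [LA, Lang, run_append, hrun, run, δAr, hsub]
  · induction s using List.reverseRecOn with
    | nil => exact fun _ => .nil
    | append_singleton s x ih =>
      rintro ⟨hL, hF⟩
      obtain ⟨st, hrun, hstep⟩ := exists_run_of_run_append_singleton_isSome hL
      obtain ⟨hFs, hx⟩ := (followsControl_append_singleton _ _ _).1 hF
      have hs := ih ⟨by simp [LA, Lang, hrun], hFs⟩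
      rcases x with γ | e
      · obtain ⟨p, rfl, -⟩ := δAr_inl_isSome.1 hstep
        rcases hx γ rfl with rfl | rfl
        · exact .p1uc s p hs hrun
        · exact .p1R s p hs hrun
      · obtain ⟨q, rfl, hoe⟩ := δAr_inr_isSome hstep
        exact .p2 s q e hs hrun hoe hL

end Arena

theorem LR_controllable_and_normal_general
    (So Suc Sa : Set S)
    (δG : XG → S → Option XG) (x0G : XG)
    (δR : XR → S → Option XR) (x0R : XR) (hR : IsSupRealization So Suc δR)
    (δA : XA → Ev S → Option XA) (x0A : XA) :
    ControllableLang (LA So Suc Sa δG δA x0G x0A) (Ec Suc)ᶜ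
      {s | LRmem So Suc Sa δG x0G δA x0A δR x0R s} ∧
    NormalLang projEo (LA So Suc Sa δG δA x0G x0A)
      {s | LRmem So Suc Sa δG x0G δA x0A δR x0R s} := by
  simp only [Set.mem_ofPred_eq, ControllableLang, NormalLang, lrMem_iff hR.1]
  constructor
  · intro s hs a ha hsa
    refine ⟨hsa, (followsControl_append_singleton _ _ _).2 ⟨hs.2, ?_⟩⟩
    rintro γ rfl
    obtain ⟨_, -, hstep⟩ := exists_run_of_run_append_singleton_isSome hsa
    obtain ⟨-, -, hsub⟩ := δAr_inl_isSome.1 hstep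
    exact Or.inl (by_contra fun hne => ha ⟨γ, rfl, hsub, hne⟩)
  · ext s
    constructor
    · exact fun hs => ⟨hs.1, s, hs, rfl⟩
    · rintro ⟨hL, t, ⟨-, ht⟩, hts⟩
      rw [← followsControl_projEo, hts, followsControl_projEo] at ht
      exact ⟨hL, ht⟩

/-- the language `L_R` induced in the arena by a supervisor `R`
is controllable w.r.t. `L(𝒜)` and the uncontrollable meta-events `E \ E_c`
(where `E_c = Γ \ {Σ_uc}`), and normal w.r.t. the observable meta-events
`E_o = E \ Σ_a^e` and `L(𝒜)`. -/
theorem LR_controllable_and_normal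
    [Finite S] [Finite XG] [Finite XR] [Finite XA]
    (So Suc Sa : Set S) (hSa : Sa ⊆ So)
    (δG : XG → S → Option XG) (x0G : XG)
    (δR : XR → S → Option XR) (x0R : XR) (hR : IsSupRealization So Suc δR)
    (δA : XA → Ev S → Option XA) (x0A : XA) (hA : IsAttack So Sa δA) :
    ControllableLang (LA So Suc Sa δG δA x0G x0A) (Ec Suc)ᶜ
      {s | LRmem So Suc Sa δG x0G δA x0A δR x0R s} ∧
    NormalLang projEo (LA So Suc Sa δG δA x0G x0A)
      {s | LRmem So Suc Sa δG x0G δA x0A δR x0R s} :=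
  LR_controllable_and_normal_general So Suc Sa δG x0G δR x0R hR δA x0A

end RobustDES
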